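/- arXiv:1808.08594 — 3 statements merged into one kernel-verified Lean document; each statement's English description precedes it below -/
import Mathlib

section
/- For every ε with 0 < ε < 1/12 there exist a real X = X(ε) > 0 and Δ₀ = Δ₀(ε) such that for every real Δ ≥ Δ₀, setting I = ⌈X·ln Δ⌉, the sequences (L_i) and (T_i) satisfy L_I > 10·T_I and L_I > Δ^{9/10} and T_I > Δ^{9/10}. -/
/-!
Write `v = 1 / ln Δ`. While `(1 + ε) T_i ≤ L_i`, the exponent `T_i / (L_i ln Δ)` in `keep_i` is at
most `v / (1 + ε)`, so `keep_i ≥ exp (-(1 - 5ε/6) v)`. Hence one step shrinks both `L_i` and `T_i`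
by at most a factor `e^{-4v}`, the additive `Δ^{2/3}` being negligible against
`L_i ≥ Δ e^{-160/ε}`. Moreover the extra loss `(1 - ε/2) v keep_i²` of `T_i` beats the shortfall
`1 - keep_i ≤ (1 - 5ε/6) v`, so the ratio `T_i / L_i` drops by a factor `e^{-εv/4}` per step.
After `I ≈ 40 ln Δ / ε` steps, `L_I, T_I ≥ Δ e^{-160/ε - 1} > Δ^{9/10}` and
`T_I / L_I ≤ e^{-10} < 1/10`.
-/

/-- The sequences `(L_i, T_i)` of the paper: `L₀ = (1+ε)Δ`, `T₀ = Δ`, and with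
`keep_i = (1 − 1/(L_i ln Δ))^{T_i}` (real power),
`L_{i+1} = L_i keep_i² − Δ^{2/3}` and
`T_{i+1} = T_i (1 − ((1−ε/2)/ln Δ) keep_i²) keep_i + Δ^{2/3}`. -/
noncomputable def LTseq (ε Δ : ℝ) : ℕ → ℝ × ℝ
  | 0 => ((1 + ε) * Δ, Δ)
  | n + 1 =>
      let L := (LTseq ε Δ n).1
      let T := (LTseq ε Δ n).2
      let keep := (1 - 1 / (L * Real.log Δ)) ^ T
      (L * keep ^ 2 - Δ ^ ((2 : ℝ) / 3),
       T * (1 - ((1 - ε / 2) / Real.log Δ) * keep ^ 2) * keep + Δ ^ ((2 : ℝ) / 3))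

open Real Filter

theorem exp_neg_mul_one_add_two_mul_le_one_sub {x : ℝ} (hx0 : 0 ≤ x) (hx : x ≤ 1 / 2) :
    exp (-(x * (1 + 2 * x))) ≤ 1 - x := by
  have hpos : 0 < 1 - x := by linarith
  rw [← le_log_iff_exp_le hpos]
  have hinv : 1 - (1 - x)⁻¹ = -(x / (1 - x)) := by field_simp; ring
  have hdiv : x / (1 - x) ≤ x * (1 + 2 * x) := by
    rw [div_le_iff₀ hpos]
    nlinarith [mul_nonneg (mul_nonneg hx0 hx0) (by linarith : (0:ℝ) ≤ 1 - 2 * x)]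
  linarith [one_sub_inv_le_log_of_pos hpos]

theorem exp_neg_le_one_sub_rpow {x T : ℝ} (hx0 : 0 ≤ x) (hx : x ≤ 1 / 2) (hT : 0 ≤ T)
    (hTx : T * x ≤ 1) : exp (-(T * x + 2 * x)) ≤ (1 - x) ^ T := by
  calc exp (-(T * x + 2 * x)) ≤ exp (-(x * (1 + 2 * x)) * T) :=
        exp_le_exp.2 (by nlinarith [mul_le_mul_of_nonneg_left hTx hx0])
    _ = exp (-(x * (1 + 2 * x))) ^ T := exp_mul _ _
    _ ≤ (1 - x) ^ T :=
        rpow_le_rpow (exp_pos _).le (exp_neg_mul_one_add_two_mul_le_one_sub hx0 hx) hT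

theorem exp_neg_le_one_sub_one_div_rpow {ε l L T : ℝ} (hε0 : 0 < ε) (hε : ε < 1 / 12)
    (hl : 1 ≤ l) (hL : 120 ≤ ε * L) (hT : 0 ≤ T) (hTL : (1 + ε) * T ≤ L) :
    exp (-((1 - 5 * ε / 6) / l)) ≤ (1 - 1 / (L * l)) ^ T := by
  have hLpos : 0 < L := by nlinarith
  have hlpos : 0 < l := by linarith
  set y := 1 / L with hy
  have hx : 1 / (L * l) = y / l := by rw [hy]; field_simp
  have hy0 : 0 < y := by positivity
  have hyε : 120 * y ≤ ε := by rw [hy, mul_one_div, div_le_iff₀ hLpos]; linarith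
  have hTy : (1 + ε) * (T * y) ≤ 1 := by
    rw [hy, mul_one_div, mul_div_assoc', div_le_one hLpos]; linarith
  have hTy' : T * y ≤ 1 - 51 * ε / 60 := by nlinarith [mul_nonneg hT hy0.le]
  rw [hx]
  refine le_trans (exp_le_exp.2 ?_) (exp_neg_le_one_sub_rpow (by positivity) ?_ hT ?_)
  · rw [neg_le_neg_iff, show T * (y / l) + 2 * (y / l) = (T * y + 2 * y) / l by ring]
    gcongr
    linarith
  · rw [div_le_iff₀ hlpos]; linarith
  · rw [← mul_div_assoc, div_le_one hlpos]; nlinarith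

theorem mul_exp_neg_le_mul_sq_sub {L v k D : ℝ} (hL : 0 ≤ L) (hv0 : 0 ≤ v) (hv : v ≤ 1 / 8)
    (hk : exp (-v) ≤ k) (hD : D ≤ L * v) : L * exp (-(4 * v)) ≤ L * k ^ 2 - D := by
  have hk2 : exp (-(2 * v)) ≤ k ^ 2 := by
    calc exp (-(2 * v)) = exp (-v) ^ 2 := by rw [← exp_nat_mul]; ring_nf
      _ ≤ k ^ 2 := pow_le_pow_left₀ (exp_pos _).le hk 2
  have hgap : v ≤ exp (-(2 * v)) - exp (-(4 * v)) := by
    have hsplit : exp (-(2 * v)) = exp (-(4 * v)) * exp (2 * v) := by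
      rw [← exp_add]; ring_nf
    have h4 : 1 / 2 ≤ exp (-(4 * v)) := by linarith [add_one_le_exp (-(4 * v))]
    rw [hsplit]
    nlinarith [add_one_le_exp (2 * v)]
  nlinarith [mul_le_mul_of_nonneg_left hk2 hL, mul_le_mul_of_nonneg_left hgap hL]

theorem mul_exp_neg_le_mul_one_sub_mul_add {T D v c k : ℝ} (hT : 0 ≤ T) (hD : 0 ≤ D)
    (hv0 : 0 ≤ v) (hv : v ≤ 1 / 2) (hc : c * k ^ 2 ≤ v) (hk : exp (-v) ≤ k) :
    T * exp (-(4 * v)) ≤ T * (1 - c * k ^ 2) * k + D := by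
  have h1 : exp (-(3 * v)) ≤ 1 - c * k ^ 2 := by
    calc exp (-(3 * v)) ≤ exp (-(v * (1 + 2 * v))) := exp_le_exp.2 (by nlinarith)
      _ ≤ 1 - v := exp_neg_mul_one_add_two_mul_le_one_sub hv0 hv
      _ ≤ 1 - c * k ^ 2 := by linarith
  have h2 : exp (-(4 * v)) ≤ (1 - c * k ^ 2) * k := by
    calc exp (-(4 * v)) = exp (-(3 * v)) * exp (-v) := by rw [← exp_add]; ring_nf
      _ ≤ (1 - c * k ^ 2) * k := mul_le_mul h1 hk (exp_pos _).le (by linarith [exp_pos (-(3 * v))])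
  nlinarith [mul_le_mul_of_nonneg_left h2 hT]

theorem le_exp_neg_mul_add_mul_sq_sub_one {ε v k : ℝ} (hε0 : 0 < ε) (hε : ε < 1 / 12)
    (hv0 : 0 ≤ v) (hv : v ≤ ε / 40) (hk : exp (-((1 - 5 * ε / 6) * v)) ≤ k) :
    ε * v / 30 ≤ exp (-(ε * v / 4)) * k + (1 - ε / 2) * v * k ^ 2 - 1 := by
  set w := (1 - 5 * ε / 6) * v with hw
  have hw0 : 0 ≤ w := mul_nonneg (by linarith) hv0
  have hwv : w ≤ v := by nlinarith
  have hqk : 1 - ε * v / 4 - w ≤ exp (-(ε * v / 4)) * k := by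
    calc 1 - ε * v / 4 - w ≤ exp (-(ε * v / 4) + -w) := by
          linarith [add_one_le_exp (-(ε * v / 4) + -w)]
      _ = exp (-(ε * v / 4)) * exp (-w) := exp_add _ _
      _ ≤ exp (-(ε * v / 4)) * k := by gcongr
  have hk2 : 1 - 2 * w ≤ k ^ 2 := by
    calc 1 - 2 * w ≤ exp (-w) ^ 2 := by
          rw [← exp_nat_mul]; push_cast; linarith [add_one_le_exp (2 * -w)]
      _ ≤ k ^ 2 := pow_le_pow_left₀ (exp_pos _).le hk 2
  have hck2 : (1 - ε / 2) * v * (1 - 2 * w) ≤ (1 - ε / 2) * v * k ^ 2 := by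
    gcongr; nlinarith
  nlinarith [mul_le_mul (by nlinarith : (1 - ε / 2) * v ≤ v) hwv hw0 hv0]

theorem one_add_mul_add_le_mul_sub_mul {ε L T D a k s q : ℝ} (hε1 : ε ≤ 1) (hD : 0 ≤ D)
    (ha : 0 ≤ a) (hsq1 : s * q ≤ 1) (hTL : (1 + ε) * T ≤ L * s)
    (hgain : 3 * D ≤ L * s * (q * k ^ 2 - a)) :
    (1 + ε) * (T * a + D) ≤ (L * k ^ 2 - D) * (s * q) := by
  nlinarith [mul_le_mul_of_nonneg_right hTL ha, mul_le_of_le_one_right hD hsq1]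

theorem LTseq_step {ε l L T s D : ℝ} (hε0 : 0 < ε) (hε : ε < 1 / 12) (hl : 40 / ε ≤ l)
    (hL : 120 ≤ ε * L) (hT : 0 ≤ T) (hD : 0 ≤ D) (hs0 : 0 ≤ s) (hs1 : s ≤ 1)
    (hTL : (1 + ε) * T ≤ L * s) (hDL : 180 * l * D ≤ ε * L * s) :
    let k := (1 - 1 / (L * l)) ^ T
    L * exp (-(4 / l)) ≤ L * k ^ 2 - D ∧
    T * exp (-(4 / l)) ≤ T * (1 - (1 - ε / 2) / l * k ^ 2) * k + D ∧
    (1 + ε) * (T * (1 - (1 - ε / 2) / l * k ^ 2) * k + D) ≤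
      (L * k ^ 2 - D) * (s * exp (-(ε / (4 * l)))) := by
  intro k
  have hlpos : 0 < l := lt_of_lt_of_le (by positivity) hl
  have hv : l⁻¹ ≤ ε / 40 := by simpa using inv_anti₀ (by positivity) hl
  have hv0 : 0 ≤ l⁻¹ := inv_nonneg.2 hlpos.le
  have hLpos : 0 < L := by nlinarith
  have hl1 : 1 ≤ l := by rw [div_le_iff₀ hε0] at hl; nlinarith
  have hk : exp (-((1 - 5 * ε / 6) * l⁻¹)) ≤ k := by
    rw [← div_eq_mul_inv]
    exact exp_neg_le_one_sub_one_div_rpow hε0 hε hl1 hL hT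
      (hTL.trans (mul_le_of_le_one_right hLpos.le hs1))
  have hkv : exp (-l⁻¹) ≤ k := (exp_le_exp.2 (by nlinarith)).trans hk
  have hk1 : k ≤ 1 :=
    rpow_le_one (sub_nonneg.2 ((div_le_one (by positivity)).2 (by nlinarith)))
      (sub_le_self _ (by positivity)) hT
  have hkhalf : 1 / 2 ≤ k := by linarith [add_one_le_exp (-l⁻¹)]
  have hc : (1 - ε / 2) * l⁻¹ * k ^ 2 ≤ l⁻¹ := by
    have hk2 : k ^ 2 ≤ 1 := pow_le_one₀ (by linarith) hk1
    calc (1 - ε / 2) * l⁻¹ * k ^ 2 ≤ 1 * l⁻¹ * 1 := by gcongr; linarith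
      _ = l⁻¹ := by ring
  have hDv : D ≤ L * l⁻¹ := by
    rw [← div_eq_mul_inv, le_div_iff₀ hlpos]
    nlinarith [mul_le_of_le_one_right hLpos.le hs1]
  have hgain : ε * l⁻¹ / 30 ≤ exp (-(ε * l⁻¹ / 4)) * k + (1 - ε / 2) * l⁻¹ * k ^ 2 - 1 :=
    le_exp_neg_mul_add_mul_sq_sub_one hε0 hε hv0 hv hk
  rw [div_eq_mul_inv 4, show ε / (4 * l) = ε * l⁻¹ / 4 by ring, div_eq_mul_inv (1 - ε / 2)]
  refine ⟨mul_exp_neg_le_mul_sq_sub hLpos.le hv0 (by linarith) hkv hDv,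
    mul_exp_neg_le_mul_one_sub_mul_add hT hD hv0 (by linarith) hc hkv, ?_⟩
  rw [mul_assoc T]
  refine one_add_mul_add_le_mul_sub_mul (by linarith) hD ?_ ?_ hTL ?_
  · exact mul_nonneg (by linarith) (by linarith)
  · refine mul_le_one₀ hs1 (exp_pos _).le (exp_le_one_iff.2 ?_)
    have : 0 ≤ ε * l⁻¹ / 4 := by positivity
    linarith
  · rw [show exp (-(ε * l⁻¹ / 4)) * k ^ 2 - (1 - (1 - ε / 2) * l⁻¹ * k ^ 2) * k
        = k * (exp (-(ε * l⁻¹ / 4)) * k + (1 - ε / 2) * l⁻¹ * k ^ 2 - 1) by ring]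
    calc 3 * D ≤ L * s * (1 / 2 * (ε * l⁻¹ / 30)) := by
          nlinarith [mul_le_mul_of_nonneg_right hDL hv0, mul_inv_cancel₀ hlpos.ne']
      _ ≤ L * s * (k * (exp (-(ε * l⁻¹ / 4)) * k + (1 - ε / 2) * l⁻¹ * k ^ 2 - 1)) := by
          gcongr

def LTseqInvariant (ε Δ : ℝ) (i : ℕ) : Prop :=
  Δ * exp (-(4 * i / log Δ)) ≤ (LTseq ε Δ i).1 ∧ Δ * exp (-(4 * i / log Δ)) ≤ (LTseq ε Δ i).2 ∧
    (1 + ε) * (LTseq ε Δ i).2 ≤ (LTseq ε Δ i).1 * exp (-(ε * i / (4 * log Δ)))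

theorem LTseqInvariant_zero {ε Δ : ℝ} (hε0 : 0 ≤ ε) (hΔ : 0 ≤ Δ) : LTseqInvariant ε Δ 0 := by
  simp only [LTseqInvariant, LTseq]
  norm_num
  nlinarith

theorem LTseqInvariant.succ {ε Δ : ℝ} {n : ℕ} (hε0 : 0 < ε) (hε : ε < 1 / 12) (hΔ : 1 < Δ)
    (hl : 40 / ε ≤ log Δ)
    (hgrowth : 180 * log Δ * Δ ^ ((2 : ℝ) / 3) ≤ ε * exp (-(160 / ε + 10)) * Δ)
    (hn : ε * n ≤ 40 * log Δ) (h : LTseqInvariant ε Δ n) : LTseqInvariant ε Δ (n + 1) := by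
  obtain ⟨hL, hT, hTL⟩ := h
  simp only [LTseqInvariant, LTseq]
  set l := log Δ
  set L := (LTseq ε Δ n).1
  set T := (LTseq ε Δ n).2
  clear_value L T
  have hlpos : 0 < l := lt_of_lt_of_le (by positivity) hl
  have hΔpos : 0 < Δ := by linarith
  have hshrink : exp (-(160 / ε)) ≤ exp (-(4 * n / l)) := by
    refine exp_le_exp.2 (neg_le_neg ?_)
    rw [div_le_div_iff₀ hlpos hε0]; linarith
  have hs10 : exp (-10) ≤ exp (-(ε * n / (4 * l))) := by
    refine exp_le_exp.2 (neg_le_neg ?_)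
    rw [div_le_iff₀ (by positivity)]; linarith
  have hs1 : exp (-(ε * n / (4 * l))) ≤ 1 :=
    exp_le_one_iff.2 (neg_nonpos.2 (by positivity))
  have hLs : Δ * exp (-(160 / ε + 10)) ≤ L * exp (-(ε * n / (4 * l))) := by
    rw [neg_add, exp_add, ← mul_assoc]
    exact mul_le_mul ((mul_le_mul_of_nonneg_left hshrink hΔpos.le).trans hL) hs10
      (exp_pos _).le ((mul_pos hΔpos (exp_pos _)).le.trans hL)
  have hDL : 180 * l * Δ ^ ((2 : ℝ) / 3) ≤ ε * L * exp (-(ε * n / (4 * l))) := by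
    calc 180 * l * Δ ^ ((2 : ℝ) / 3) ≤ ε * (Δ * exp (-(160 / ε + 10))) := by linarith
      _ ≤ ε * (L * exp (-(ε * n / (4 * l)))) := by gcongr
      _ = ε * L * exp (-(ε * n / (4 * l))) := by ring
  have hD1 : 180 ≤ 180 * l * Δ ^ ((2 : ℝ) / 3) := by
    have hl1 : 1 ≤ l := by rw [div_le_iff₀ hε0] at hl; nlinarith
    nlinarith [one_le_rpow hΔ.le (by norm_num : (0 : ℝ) ≤ 2 / 3)]
  obtain ⟨hL', hT', hTL'⟩ := LTseq_step hε0 hε hl (by nlinarith [exp_pos (-(ε * n / (4 * l)))])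
    ((mul_pos hΔpos (exp_pos _)).le.trans hT) (rpow_nonneg hΔpos.le _) (exp_pos _).le hs1 hTL hDL
  have hstep (c : ℝ) : exp (-(c * ↑(n + 1) / l)) = exp (-(c * n / l)) * exp (-(c / l)) := by
    rw [← exp_add]; push_cast; ring_nf
  refine ⟨?_, ?_, ?_⟩
  · rw [hstep, ← mul_assoc]; exact (mul_le_mul_of_nonneg_right hL (exp_pos _).le).trans hL'
  · rw [hstep, ← mul_assoc]; exact (mul_le_mul_of_nonneg_right hT (exp_pos _).le).trans hT'
  · convert hTL' using 2
    rw [← exp_add]; push_cast; ring_nf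

theorem LTseqInvariant_of_le {ε Δ : ℝ} (hε0 : 0 < ε) (hε : ε < 1 / 12) (hΔ : 1 < Δ)
    (hl : 40 / ε ≤ log Δ)
    (hgrowth : 180 * log Δ * Δ ^ ((2 : ℝ) / 3) ≤ ε * exp (-(160 / ε + 10)) * Δ) :
    ∀ i : ℕ, (i : ℝ) ≤ 40 / ε * log Δ + 1 → LTseqInvariant ε Δ i
  | 0, _ => LTseqInvariant_zero hε0.le (by linarith)
  | n + 1, hn => by
    push_cast at hn
    refine (LTseqInvariant_of_le hε0 hε hΔ hl hgrowth n (by linarith)).succ hε0 hε hΔ hl hgrowth ?_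
    calc ε * n ≤ ε * (40 / ε * log Δ) := by gcongr; linarith
      _ = 40 * log Δ := by field_simp

theorem eventually_LTseq_hypotheses {ε : ℝ} (hε0 : 0 < ε) :
    ∀ᶠ Δ in atTop, 1 < Δ ∧ 40 / ε ≤ log Δ ∧
      180 * log Δ * Δ ^ ((2 : ℝ) / 3) ≤ ε * exp (-(160 / ε + 10)) * Δ ∧
      exp (160 / ε + 1) < Δ ^ ((1 : ℝ) / 10) := by
  have hlog := (isLittleO_log_rpow_atTop (by norm_num : (0 : ℝ) < 1 / 3)).def
    (by positivity : 0 < ε * exp (-(160 / ε + 10)) / 180)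
  filter_upwards [eventually_gt_atTop 1, tendsto_log_atTop.eventually_ge_atTop (40 / ε),
    hlog, (tendsto_rpow_atTop (by norm_num : (0 : ℝ) < 1 / 10)).eventually_gt_atTop
      (exp (160 / ε + 1))] with Δ hΔ hl hlog hroot
  refine ⟨hΔ, hl, ?_, hroot⟩
  have hΔpos : 0 < Δ := by linarith
  rw [norm_of_nonneg (log_nonneg hΔ.le), norm_of_nonneg (rpow_nonneg hΔpos.le _)] at hlog
  calc 180 * log Δ * Δ ^ ((2 : ℝ) / 3)
      ≤ 180 * (ε * exp (-(160 / ε + 10)) / 180 * Δ ^ ((1 : ℝ) / 3)) * Δ ^ ((2 : ℝ) / 3) := by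
        gcongr
    _ = ε * exp (-(160 / ε + 10)) * (Δ ^ ((1 : ℝ) / 3) * Δ ^ ((2 : ℝ) / 3)) := by ring
    _ = ε * exp (-(160 / ε + 10)) * Δ := by rw [← rpow_add hΔpos]; norm_num

theorem rpow_nine_div_ten_lt_mul_exp_neg {Δ a b : ℝ} (hΔ : 0 < Δ)
    (ha : exp a < Δ ^ ((1 : ℝ) / 10)) (hb : b ≤ a) : Δ ^ ((9 : ℝ) / 10) < Δ * exp (-b) :=
  calc Δ ^ ((9 : ℝ) / 10) = Δ ^ ((9 : ℝ) / 10) * exp a * exp (-a) := by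
        rw [mul_assoc, ← exp_add]; simp
    _ < Δ ^ ((9 : ℝ) / 10) * Δ ^ ((1 : ℝ) / 10) * exp (-a) := by gcongr
    _ = Δ * exp (-a) := by rw [← rpow_add hΔ]; norm_num
    _ ≤ Δ * exp (-b) := by gcongr

theorem ten_mul_lt_of_one_add_mul_le_mul_exp_neg {ε L T c : ℝ} (hε : 0 ≤ ε) (hT : 0 < T)
    (hc : 10 ≤ c) (h : (1 + ε) * T ≤ L * exp (-c)) : 10 * T < L := by
  have hL : 0 < L :=
    pos_of_mul_pos_left ((by positivity : 0 < (1 + ε) * T).trans_le h) (exp_pos _).le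
  have hsmall : 11 * exp (-c) ≤ 1 := by
    rw [exp_neg, ← div_eq_mul_inv, div_le_one (exp_pos _)]
    linarith [add_one_le_exp c]
  nlinarith

/-- For every `0 < ε < 1/12` there are `X = X(ε) > 0` and `Δ₀ = Δ₀(ε)` such that
for all `Δ ≥ Δ₀`, with `I = ⌈X ln Δ⌉`, we have `L_I > 10 T_I` and
`L_I, T_I > Δ^{9/10}`. -/
theorem stmt5 (ε : ℝ) (hε0 : 0 < ε) (hε : ε < 1 / 12) :
    ∃ X : ℝ, 0 < X ∧ ∃ Δ₀ : ℝ, ∀ Δ : ℝ, Δ₀ ≤ Δ →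
      (LTseq ε Δ ⌈X * Real.log Δ⌉₊).1 > 10 * (LTseq ε Δ ⌈X * Real.log Δ⌉₊).2 ∧
      (LTseq ε Δ ⌈X * Real.log Δ⌉₊).1 > Δ ^ ((9 : ℝ) / 10) ∧
      (LTseq ε Δ ⌈X * Real.log Δ⌉₊).2 > Δ ^ ((9 : ℝ) / 10) := by
  obtain ⟨Δ₀, hΔ₀⟩ := eventually_atTop.1 (eventually_LTseq_hypotheses hε0)
  refine ⟨40 / ε, by positivity, Δ₀, fun Δ hΔ => ?_⟩
  obtain ⟨hΔ1, hl, hgrowth, hroot⟩ := hΔ₀ Δ hΔ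
  have hlpos : 0 < log Δ := log_pos hΔ1
  set I := ⌈40 / ε * log Δ⌉₊
  have hI : 40 / ε * log Δ ≤ I := Nat.le_ceil _
  have hI' : (I : ℝ) < 40 / ε * log Δ + 1 := Nat.ceil_lt_add_one (by positivity)
  obtain ⟨hL, hT, hTL⟩ := LTseqInvariant_of_le hε0 hε hΔ1 hl hgrowth I hI'.le
  have h4I : 4 * I / log Δ ≤ 160 / ε + 1 := by
    have hl4 : 4 ≤ log Δ := le_trans (by rw [le_div_iff₀ hε0]; linarith) hl
    rw [div_le_iff₀ hlpos, add_mul, one_mul, show 160 / ε * log Δ = 4 * (40 / ε * log Δ) by ring]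
    linarith
  have hεI : 10 ≤ ε * I / (4 * log Δ) := by
    rw [le_div_iff₀ (by positivity)]
    rw [div_mul_eq_mul_div, div_le_iff₀ hε0] at hI
    linarith
  have hpow := rpow_nine_div_ten_lt_mul_exp_neg (by linarith) hroot h4I
  exact ⟨ten_mul_lt_of_one_add_mul_le_mul_exp_neg hε0.le
    ((mul_pos (by linarith) (exp_pos _)).trans_le hT) hεI hTL, hpow.trans_le hL, hpow.trans_le hT⟩
end

section
/- For every ε with 0 < ε < 1/12 there exists Δ₀ = Δ₀(ε) such that for every real Δ ≥ Δ₀ the following holds: if L and T are reals with L/T ≥ 1+ε, L ≥ Δ^{9/10} and T ≥ Δ^{9/10}, and we set keep = (1 − 1/(L·ln Δ))^{T}, L' = L·keep² − Δ^{2/3}, and T' = T·(1 − ((1−ε/2)/ln Δ)·keep²)·keep + Δ^{2/3}, then L'/T' ≥ (L/T)·(1 + ε/(4·ln Δ)). -/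
/-! Write `d = 1 / log Δ` and `k = keep`. Bernoulli's inequality and `T ≤ L / (1 + ε)` give
`1 - d / (1 + ε) ≤ k ≤ 1`, and in this window the polynomial `k² - (1 + εd/4)(1 - (1 - ε/2)d k²) k`
is at least `9εd/208` once `d` is small. Multiplied by `L`, this gain of order `L / log Δ` absorbs
both error terms `Δ^{2/3}`, because `L ≥ T ≥ Δ^{9/10}` and `log Δ · Δ^{2/3} = o(Δ^{9/10})`. -/

open Real Filter

lemma one_sub_mul_le_one_sub_rpow {x p : ℝ} (hx : x ≤ 1) (hp : 1 ≤ p) :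
    1 - p * x ≤ (1 - x) ^ p := by
  simpa [sub_eq_add_neg] using one_add_mul_self_le_rpow_one_add (s := -x) (by linarith) hp

lemma eventually_log_mul_rpow_le {a b c : ℝ} (hab : a < b) (hc : 0 < c) :
    ∀ᶠ x in atTop, log x * x ^ a ≤ c * x ^ b := by
  filter_upwards [(isLittleO_log_rpow_atTop (sub_pos.2 hab)).def hc, eventually_ge_atTop 1]
    with x hlog hx1
  have hx0 : 0 < x := by linarith
  rw [norm_of_nonneg (log_nonneg hx1), norm_of_nonneg (rpow_nonneg hx0.le _)] at hlog
  calc log x * x ^ a ≤ c * x ^ (b - a) * x ^ a := by gcongr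
    _ = c * x ^ b := by rw [mul_assoc, ← rpow_add hx0, sub_add_cancel]

lemma gain_polynomial_ge {ε d k : ℝ} (hε0 : 0 < ε) (hε : ε < 1 / 12) (hd0 : 0 < d)
    (hd : d ≤ 9 * ε / 416) (hk1 : k ≤ 1) (hk : 1 - d / (1 + ε) ≤ k) :
    9 * ε * d / 208 ≤ k ^ 2 - (1 + ε * d / 4) * (1 - (1 - ε / 2) * d * k ^ 2) * k := by
  have hε1 : (0:ℝ) < 1 + ε := by linarith
  have ht : (1 - k) * (1 + ε) ≤ d := by
    rw [← le_div_iff₀ hε1]; linarith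
  have htk : 1 - k ≤ d := by nlinarith
  have hk2 : (1:ℝ) / 2 ≤ k := by nlinarith
  have hdd : d * d ≤ d * (9 * ε / 416) := by nlinarith
  -- To first order in `d`, with `k = 1 - t` and `t ≤ d / (1 + ε)`, this factor is at least
  -- `ε d (1 / (1 + ε) - 3 / 4) ≥ 9 ε d / 52` as `ε < 1 / 12`; `d ≤ 9 ε / 416` pays for the `d²` terms.
  have hinner : 27 * ε * d / 208 ≤ k - (1 + ε * d / 4) * (1 - (1 - ε / 2) * d * k ^ 2) := by
    nlinarith [mul_pos hd0 hε0, sq_nonneg (1 - k), mul_nonneg hd0.le (sq_nonneg (1 - k)),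
      mul_le_mul_of_nonneg_left htk hd0.le, ht, hdd,
      mul_nonneg (mul_nonneg (mul_pos hd0 hε0).le hd0.le) (sq_nonneg k),
      mul_nonneg (mul_nonneg hε0.le hd0.le) (sub_nonneg.2 hk1)]
  nlinarith [hinner, hk2, mul_pos hε0 hd0]

lemma div_ge_of_keep_bounds {ε l k L T E : ℝ} (hε0 : 0 < ε) (hε : ε < 1 / 12)
    (hl : 416 / (9 * ε) ≤ l) (hk1 : k ≤ 1) (hk : 1 - 1 / l / (1 + ε) ≤ k) (hT : 0 < T)
    (hLT : (1 + ε) * T ≤ L) (hE : 0 ≤ E) (hET : 624 * l * E ≤ 9 * ε * T) :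
    (L * k ^ 2 - E) / (T * (1 - ((1 - ε / 2) / l) * k ^ 2) * k + E) ≥
      L / T * (1 + ε / (4 * l)) := by
  have hl0 : 0 < l := lt_of_lt_of_le (by positivity) hl
  set d := 1 / l with hd_def
  have hd0 : 0 < d := by positivity
  have hd : d ≤ 9 * ε / 416 := by
    rw [hd_def, div_le_div_iff₀ hl0 (by positivity)]
    rw [div_le_iff₀ (by positivity)] at hl
    linarith
  rw [show (1 - ε / 2) / l = (1 - ε / 2) * d by ring, show ε / (4 * l) = ε * d / 4 by ring]
  have hgain := gain_polynomial_ge hε0 hε hd0 hd hk1 hk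
  have hk0 : 0 < k := by
    have : d / (1 + ε) ≤ d := div_le_self hd0.le (by linarith)
    linarith
  have hshrink : 0 < 1 - (1 - ε / 2) * d * k ^ 2 := by
    have hk2 : k ^ 2 ≤ 1 := pow_le_one₀ hk0.le hk1
    have : (1 - ε / 2) * k ^ 2 ≤ 1 := by nlinarith
    nlinarith
  have hL : 0 < L := by nlinarith
  have hratio : 1 ≤ L / T := by rw [le_div_iff₀ hT]; nlinarith
  have hfactor : 1 + ε * d / 4 ≤ 2 := by nlinarith
  have hEd : E ≤ 3 * ε * d * T / 208 := by
    rw [hd_def]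
    field_simp
    linarith
  have herror : L / T * (1 + ε * d / 4) * E + E ≤ 9 * ε * d * L / 208 :=
    calc L / T * (1 + ε * d / 4) * E + E ≤ L / T * 2 * E + L / T * E := by
          gcongr
          exact le_mul_of_one_le_left hE hratio
      _ = 3 * (L / T) * E := by ring
      _ ≤ 3 * (L / T) * (3 * ε * d * T / 208) := by gcongr
      _ = 9 * ε * d * L / 208 := by field_simp; ring
  rw [ge_iff_le, le_div_iff₀ (by positivity)]
  calc L / T * (1 + ε * d / 4) * (T * (1 - (1 - ε / 2) * d * k ^ 2) * k + E)
      = L * ((1 + ε * d / 4) * (1 - (1 - ε / 2) * d * k ^ 2) * k)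
        + (L / T * (1 + ε * d / 4) * E) := by field_simp
    _ ≤ L * (k ^ 2 - 9 * ε * d / 208) + (9 * ε * d * L / 208 - E) := by
        gcongr
        · linarith
        · linarith
    _ = L * k ^ 2 - E := by ring

/-- For every `0 < ε < 1/12` there is a `Δ₀` such that for all `Δ ≥ Δ₀`: if
`L/T ≥ 1+ε` and `L, T ≥ Δ^{9/10}`, then with
`keep = (1 − 1/(L ln Δ))^T`, `L' = L keep² − Δ^{2/3}` and
`T' = T (1 − ((1−ε/2)/ln Δ) keep²) keep + Δ^{2/3}`, we have
`L'/T' ≥ (L/T)(1 + ε/(4 ln Δ))`. -/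
theorem stmt6 (ε : ℝ) (hε0 : 0 < ε) (hε : ε < 1 / 12) :
    ∃ Δ₀ : ℝ, ∀ Δ : ℝ, Δ₀ ≤ Δ → ∀ L T : ℝ,
      L / T ≥ 1 + ε → L ≥ Δ ^ ((9 : ℝ) / 10) → T ≥ Δ ^ ((9 : ℝ) / 10) →
      (L * ((1 - 1 / (L * Real.log Δ)) ^ T) ^ 2 - Δ ^ ((2 : ℝ) / 3)) /
          (T * (1 - ((1 - ε / 2) / Real.log Δ) * ((1 - 1 / (L * Real.log Δ)) ^ T) ^ 2) *
              ((1 - 1 / (L * Real.log Δ)) ^ T) + Δ ^ ((2 : ℝ) / 3)) ≥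
        (L / T) * (1 + ε / (4 * Real.log Δ)) := by
  obtain ⟨Δ₀, hΔ₀⟩ := eventually_atTop.mp
    ((tendsto_log_atTop.eventually_ge_atTop (416 / (9 * ε))).and
      ((eventually_ge_atTop 1).and
        (eventually_log_mul_rpow_le (a := 2 / 3) (b := 9 / 10) (c := 9 * ε / 624)
          (by norm_num) (by positivity))))
  refine ⟨Δ₀, fun Δ hΔ L T hLT hL hT => ?_⟩
  obtain ⟨hlog, hΔ1, hsmall⟩ := hΔ₀ Δ hΔ
  have hT1 : 1 ≤ T := (one_le_rpow hΔ1 (by norm_num)).trans hT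
  have hT0 : 0 < T := by linarith
  have hTL : (1 + ε) * T ≤ L := (le_div_iff₀ hT0).mp hLT
  have hlog1 : 1 ≤ log Δ := le_trans (by rw [le_div_iff₀ (by positivity)]; linarith) hlog
  have hLlog : 1 ≤ L * log Δ := one_le_mul_of_one_le_of_one_le (by nlinarith) hlog1
  have hx0 : 0 < 1 / (L * log Δ) := one_div_pos.2 (by linarith)
  have hx : 1 / (L * log Δ) ≤ 1 := (div_le_one (by linarith)).2 hLlog
  apply div_ge_of_keep_bounds hε0 hε hlog
  · exact rpow_le_one (sub_nonneg.2 hx) (sub_le_self _ hx0.le) hT0.le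
  · calc 1 - 1 / log Δ / (1 + ε) ≤ 1 - T * (1 / (L * log Δ)) := by
          rw [sub_le_sub_iff_left, mul_one_div, div_div, div_le_div_iff₀ (by positivity)
            (by positivity)]
          nlinarith
      _ ≤ _ := one_sub_mul_le_one_sub_rpow hx hT1
  · exact hT0
  · exact hTL
  · positivity
  · calc 624 * log Δ * Δ ^ ((2 : ℝ) / 3) ≤ 9 * ε * Δ ^ ((9 : ℝ) / 10) := by linarith
      _ ≤ 9 * ε * T := by gcongr
end

section
/- For every ε with 0 < ε < 1/12 and every real X > 0 there exists Δ₀ = Δ₀(X,ε) such that for every real Δ ≥ Δ₀ and every natural number i with 1 ≤ i ≤ X·ln Δ the following holds: if for all j with 0 ≤ j < i we have L_j/T_j ≥ 1+ε, L_j ≥ Δ^{9/10} and T_j ≥ Δ^{9/10}, then L_i > T_i, T_i > Δ·e^{−2X}, and Δ·e^{−2X} > Δ^{9/10}. -/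
lemma LTseq_succ (ε Δ : ℝ) (n : ℕ) :
    LTseq ε Δ (n + 1) =
      ((LTseq ε Δ n).1 * ((1 - 1 / ((LTseq ε Δ n).1 * Real.log Δ)) ^ (LTseq ε Δ n).2) ^ 2
          - Δ ^ ((2 : ℝ) / 3),
       (LTseq ε Δ n).2 * (1 - ((1 - ε / 2) / Real.log Δ)
            * ((1 - 1 / ((LTseq ε Δ n).1 * Real.log Δ)) ^ (LTseq ε Δ n).2) ^ 2)
          * ((1 - 1 / ((LTseq ε Δ n).1 * Real.log Δ)) ^ (LTseq ε Δ n).2)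
          + Δ ^ ((2 : ℝ) / 3)) := rfl

set_option maxHeartbeats 4000000 in
lemma step_lemma (ε Δ : ℝ) (hε0 : 0 < ε) (hε : ε < 1 / 12)
    (hΔ : Real.exp (100 / ε) ≤ Δ) (j : ℕ)
    (hrat : (LTseq ε Δ j).1 / (LTseq ε Δ j).2 ≥ 1 + ε)
    (hL : (LTseq ε Δ j).1 ≥ Δ ^ ((9 : ℝ) / 10))
    (hT : (LTseq ε Δ j).2 ≥ Δ ^ ((9 : ℝ) / 10)) :
    (LTseq ε Δ (j + 1)).2 ≥ (LTseq ε Δ j).2 * Real.exp (-(2 - ε / 2) / Real.log Δ)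
    ∧ (LTseq ε Δ (j + 1)).1 - (LTseq ε Δ (j + 1)).2
        ≥ ε / 2 * (LTseq ε Δ j).2 - 2 * Δ ^ ((2 : ℝ) / 3) := by
  have hΔ0 : (0:ℝ) < Δ := lt_of_lt_of_le (Real.exp_pos _) hΔ
  set L := (LTseq ε Δ j).1 with hLdef
  set T := (LTseq ε Δ j).2 with hTdef
  set M := Real.log Δ with hMdef
  have hM : 100 / ε ≤ M := (Real.le_log_iff_exp_le hΔ0).2 hΔ
  have hM0 : 0 < M := lt_of_lt_of_le (by positivity) hM
  have hεM : 100 ≤ ε * M := by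
    have := (div_le_iff₀ hε0).1 hM; linarith
  have hinvM : 1 / M ≤ ε / 100 := by
    rw [div_le_div_iff₀ hM0 (by norm_num)]; linarith
  have hε1 : ε < 1 := by linarith
  have hT0 : 0 < T := lt_of_lt_of_le (Real.rpow_pos_of_pos hΔ0 _) hT
  have hLT : (1 + ε) * T ≤ L := (le_div_iff₀ hT0).1 hrat
  have hL0 : 0 < L := lt_of_lt_of_le (by nlinarith) hLT
  have hΔ1 : (1:ℝ) ≤ Δ := by
    have h1 := Real.add_one_le_exp (100/ε)
    have h2 : (0:ℝ) < 100/ε := by positivity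
    linarith
  have hL1 : (1:ℝ) ≤ L := le_trans (Real.one_le_rpow hΔ1 (by norm_num)) hL
  set x := 1 / (L * M) with hxdef
  have hx0 : 0 < x := by positivity
  have hx : x ≤ 1 / M := by
    rw [hxdef]
    apply one_div_le_one_div_of_le hM0
    nlinarith
  have hxe : x ≤ ε / 100 := le_trans hx hinvM
  have hx12 : x ≤ 1 / 2 := by linarith
  have h1x : 0 < 1 - x := by linarith
  set keep := (1 - x) ^ T with hkdef
  have hkeep_pos : 0 < keep := Real.rpow_pos_of_pos h1x T
  have hkeep_le1 : keep ≤ 1 := Real.rpow_le_one (le_of_lt h1x) (by linarith) (le_of_lt hT0)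
  have hkexp : keep = Real.exp (Real.log (1 - x) * T) := Real.rpow_def_of_pos h1x T
  have hlog : -(x / (1 - x)) ≤ Real.log (1 - x) := by
    have h1 : Real.log (1 - x)⁻¹ ≤ (1 - x)⁻¹ - 1 :=
      Real.log_le_sub_one_of_pos (by positivity)
    rw [Real.log_inv] at h1
    have h2 : (1 - x)⁻¹ - 1 = x / (1 - x) := by field_simp; ring
    linarith [h2.symm.le]
  set u := (1 + ε / 50) / ((1 + ε) * M) with hudef
  have hu0 : 0 < u := by positivity
  have hTx : T * x ≤ 1 / ((1 + ε) * M) := by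
    rw [hxdef, mul_one_div, div_le_div_iff₀ (by positivity) (by positivity)]
    nlinarith
  have hfrac : 1 / (1 - x) ≤ 1 + 2 * x := by
    rw [div_le_iff₀ h1x]; nlinarith
  have hTlog : -u ≤ Real.log (1 - x) * T := by
    have h3 : -(x / (1 - x)) * T ≤ Real.log (1 - x) * T :=
      mul_le_mul_of_nonneg_right hlog (le_of_lt hT0)
    have h4 : x / (1 - x) * T = (T * x) * (1 / (1 - x)) := by
      field_simp
    have h5 : (T * x) * (1 / (1 - x)) ≤ (1 / ((1 + ε) * M)) * (1 + 2 * x) :=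
      mul_le_mul hTx hfrac (by positivity) (by positivity)
    have hA : 0 < 1 / ((1 + ε) * M) := by positivity
    have h6 : (1 / ((1 + ε) * M)) * (1 + 2 * x) ≤ u := by
      have hu2 : u = (1 + ε / 50) * (1 / ((1 + ε) * M)) := by rw [hudef]; ring
      rw [hu2]
      nlinarith [mul_nonneg hA.le (show 0 ≤ ε/50 - 2*x by linarith)]
    have h7 : x / (1 - x) * T ≤ u := by rw [h4]; linarith
    have h8 : -(x / (1 - x)) * T = -(x / (1 - x) * T) := by ring
    linarith
  have hkeep_lb : Real.exp (-u) ≤ keep := by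
    rw [hkexp]; exact Real.exp_le_exp.2 hTlog
  set c := (1 - ε / 2) / M with hcdef
  have hc0 : 0 ≤ c := div_nonneg (by linarith) hM0.le
  have hcle : c ≤ 1 / M := (div_le_div_iff_of_pos_right hM0).2 (by linarith)
  have hcε : c ≤ ε / 100 := hcle.trans hinvM
  have hk2 : keep ^ 2 ≤ 1 := by nlinarith
  have hck2 : 0 ≤ c * keep ^ 2 := by positivity
  have h1ck : 1 - c ≤ 1 - c * keep ^ 2 := by nlinarith
  have h1c0 : 0 < 1 - c := by linarith
  -- Step B : exp (-(c + 2 c^2)) ≤ 1 - c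
  have hB : Real.exp (-(c + 2 * c ^ 2)) ≤ 1 - c := by
    have he : (c + 2 * c ^ 2) + 1 ≤ Real.exp (c + 2 * c ^ 2) := Real.add_one_le_exp _
    rw [Real.exp_neg]
    rw [inv_le_iff_one_le_mul₀ (Real.exp_pos _)] at *
    · nlinarith [Real.exp_pos (c + 2 * c ^ 2)]
  -- Step C+D : per-step factor bound
  have hD : c + 2 * c ^ 2 + u ≤ (2 - ε / 2) / M := by
    rw [le_div_iff₀ hM0]
    have hcM : c * M = 1 - ε / 2 := div_mul_cancel₀ _ (ne_of_gt hM0)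
    have huM : u * M = (1 + ε / 50) / (1 + ε) := by
      rw [hudef]; field_simp
    have hc2M : c ^ 2 * M ≤ ε / 100 := by
      have : c ^ 2 * M = c * (c * M) := by ring
      rw [this, hcM]; nlinarith
    have hfrac2 : (1 + ε / 50) / (1 + ε) ≤ 1 - ε / 25 := by
      rw [div_le_iff₀ (by linarith)]; nlinarith
    have hexpand : (c + 2 * c ^ 2 + u) * M = c * M + 2 * (c ^ 2 * M) + u * M := by ring
    rw [hexpand, hcM, huM]; linarith
  have hfactor : Real.exp (-((2 - ε / 2) / M)) ≤ (1 - c * keep ^ 2) * keep := by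
    have h1 : Real.exp (-((2 - ε / 2) / M)) ≤ Real.exp (-(c + 2 * c ^ 2 + u)) :=
      Real.exp_le_exp.2 (by linarith)
    have h2 : Real.exp (-(c + 2 * c ^ 2 + u))
        = Real.exp (-(c + 2 * c ^ 2)) * Real.exp (-u) := by
      rw [← Real.exp_add]; ring_nf
    have h3 : Real.exp (-(c + 2 * c ^ 2)) * Real.exp (-u) ≤ (1 - c) * keep :=
      mul_le_mul hB hkeep_lb (Real.exp_pos _).le (by linarith)
    have h4 : (1 - c) * keep ≤ (1 - c * keep ^ 2) * keep :=
      mul_le_mul_of_nonneg_right h1ck hkeep_pos.le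
    linarith [h2 ▸ h1]
  have hsucc := LTseq_succ ε Δ j
  have hLs : (LTseq ε Δ (j + 1)).1 = L * keep ^ 2 - Δ ^ ((2:ℝ)/3) := by
    rw [hsucc]
  have hTs : (LTseq ε Δ (j + 1)).2 = T * (1 - c * keep ^ 2) * keep + Δ ^ ((2:ℝ)/3) := by
    rw [hsucc]
  clear_value L T M x keep u c
  constructor
  · -- T part
    rw [hTs]
    clear hsucc hLs hTs hkexp hΔ hL hT hrat hlog
    have h5 : T * Real.exp (-((2 - ε / 2) / M)) ≤ T * ((1 - c * keep ^ 2) * keep) :=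
      mul_le_mul_of_nonneg_left hfactor hT0.le
    have hΔ23 : (0:ℝ) ≤ Δ ^ ((2:ℝ)/3) := (Real.rpow_pos_of_pos hΔ0 _).le
    have hassoc : T * ((1 - c * keep ^ 2) * keep) = T * (1 - c * keep ^ 2) * keep := by ring
    have hneg : -(2 - ε / 2) / M = -((2 - ε / 2) / M) := by ring
    rw [hneg]
    linarith
  · -- L - T part
    rw [hLs, hTs]
    clear hsucc hLs hTs hkexp hΔ hL hT hrat hlog
    have hk2lb : 1 - 2 * u ≤ keep ^ 2 := by
      have h1 : Real.exp (-u) ^ 2 ≤ keep ^ 2 :=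
        pow_le_pow_left₀ (Real.exp_pos _).le hkeep_lb 2
      have h2 : Real.exp (-u) ^ 2 = Real.exp (-(2*u)) := by
        rw [sq, ← Real.exp_add]; ring_nf
      have h3 := Real.add_one_le_exp (-(2*u))
      rw [h2] at h1
      linarith
    clear hTlog hkeep_lb hB hD hfactor
    have hule : u ≤ ε / 50 := by
      have h1 : u ≤ (1 + ε / 50) / M := by
        rw [hudef]
        refine div_le_div_of_nonneg_left (by linarith) hM0 ?_
        have he : (1 + ε) * M = M + ε * M := by ring
        linarith [mul_pos hε0 hM0]
      have h2 : (1 + ε / 50) / M ≤ ε / 50 := by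
        rw [div_le_div_iff₀ hM0 (by norm_num)]
        linarith
      linarith
    have hLk : (1 + ε / 2) * T ≤ L * keep ^ 2 := by
      have hA1 : (1 + ε) * T * (1 - 2 * u) ≤ (1 + ε) * T * keep ^ 2 :=
        mul_le_mul_of_nonneg_left hk2lb (by positivity)
      have hA2 : (1 + ε) * T * keep ^ 2 ≤ L * keep ^ 2 :=
        mul_le_mul_of_nonneg_right hLT (by positivity)
      have hA3 : (1 + ε / 2) * T ≤ (1 + ε) * T * (1 - 2 * u) := by
        nlinarith [mul_le_mul_of_nonneg_left hule
          (show (0:ℝ) ≤ 2 * (1 + ε) * T by positivity), mul_pos hε0 hT0,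
          mul_pos (mul_pos hε0 hε0) hT0, hu0]
      linarith
    have hTup : T * (1 - c * keep ^ 2) * keep ≤ T := by
      have hs1 : (1 - c * keep ^ 2) ≤ 1 := by linarith
      have hs2 : (1 - c * keep ^ 2) * keep ≤ 1 :=
        mul_le_one₀ hs1 hkeep_pos.le hkeep_le1
      have hs3 : T * ((1 - c * keep ^ 2) * keep) ≤ T * 1 :=
        mul_le_mul_of_nonneg_left hs2 hT0.le
      have hs4 : T * ((1 - c * keep ^ 2) * keep) = T * (1 - c * keep ^ 2) * keep := by ring
      linarith
    have hΔ23 : (0:ℝ) ≤ Δ ^ ((2:ℝ)/3) := (Real.rpow_pos_of_pos hΔ0 _).le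
    linarith

set_option maxHeartbeats 1000000 in
/-- For every `0 < ε < 1/12` and `X > 0` there is a `Δ₀ = Δ₀(X,ε)` such that for
all `Δ ≥ Δ₀` and natural `i` with `1 ≤ i ≤ X ln Δ`: if `L_j/T_j ≥ 1+ε` and
`L_j, T_j ≥ Δ^{9/10}` for all `0 ≤ j < i`, then `L_i > T_i`,
`T_i > Δ e^{−2X}` and `Δ e^{−2X} > Δ^{9/10}`. -/
theorem stmt8 (ε : ℝ) (hε0 : 0 < ε) (hε : ε < 1 / 12) (X : ℝ) (hX : 0 < X) :
    ∃ Δ₀ : ℝ, ∀ Δ : ℝ, Δ₀ ≤ Δ → ∀ i : ℕ, 1 ≤ i → (i : ℝ) ≤ X * Real.log Δ →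
      (∀ j : ℕ, j < i →
        (LTseq ε Δ j).1 / (LTseq ε Δ j).2 ≥ 1 + ε ∧
        (LTseq ε Δ j).1 ≥ Δ ^ ((9 : ℝ) / 10) ∧
        (LTseq ε Δ j).2 ≥ Δ ^ ((9 : ℝ) / 10)) →
      (LTseq ε Δ i).1 > (LTseq ε Δ i).2 ∧
      (LTseq ε Δ i).2 > Δ * Real.exp (-2 * X) ∧
      Δ * Real.exp (-2 * X) > Δ ^ ((9 : ℝ) / 10) := by
  refine ⟨max (Real.exp (100 / ε)) (Real.exp (20 * X + 1)), ?_⟩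
  intro Δ hΔ i hi1 hiX H
  have hΔe : Real.exp (100 / ε) ≤ Δ := le_trans (le_max_left _ _) hΔ
  have hΔX : Real.exp (20 * X + 1) ≤ Δ := le_trans (le_max_right _ _) hΔ
  have hΔ0 : (0:ℝ) < Δ := lt_of_lt_of_le (Real.exp_pos _) hΔe
  set M := Real.log Δ with hMdef
  have hMX : 20 * X + 1 ≤ M := (Real.le_log_iff_exp_le hΔ0).2 hΔX
  have hMε : 100 / ε ≤ M := (Real.le_log_iff_exp_le hΔ0).2 hΔe
  have hM0 : 0 < M := lt_of_lt_of_le (by positivity) hMε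
  have hεM : 100 ≤ ε * M := by
    have := (div_le_iff₀ hε0).1 hMε; linarith
  -- conclusion 3
  have h910 : 0 < Δ ^ ((9:ℝ)/10) := Real.rpow_pos_of_pos hΔ0 _
  have hsplit : Δ = Δ ^ ((9:ℝ)/10) * Δ ^ ((1:ℝ)/10) := by
    rw [← Real.rpow_add hΔ0]; norm_num
  have h110 : Δ ^ ((1:ℝ)/10) = Real.exp (M * (1/10)) := Real.rpow_def_of_pos hΔ0 _
  have hc3 : Δ * Real.exp (-2 * X) > Δ ^ ((9:ℝ)/10) := by
    have h3 : 0 < M * (1/10) + -2 * X := by linarith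
    have h4 : 1 < Real.exp (M * (1/10) + -2 * X) := by
      have h5 := Real.exp_lt_exp.2 h3
      rwa [Real.exp_zero] at h5
    have heq : Δ ^ ((9:ℝ)/10) * Real.exp (M * (1/10) + -2 * X) = Δ * Real.exp (-2 * X) := by
      rw [Real.exp_add, ← h110, ← mul_assoc, ← hsplit]
    have h5 : Δ ^ ((9:ℝ)/10) * 1 < Δ ^ ((9:ℝ)/10) * Real.exp (M * (1/10) + -2 * X) :=
      (mul_lt_mul_iff_right₀ h910).2 h4
    rw [heq] at h5
    linarith
  -- key induction for T lower bound
  have key : ∀ j : ℕ, j ≤ i → Δ * Real.exp (-(2 - ε/2) * j / M) ≤ (LTseq ε Δ j).2 := by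
    intro j
    induction j with
    | zero => intro _; simp [LTseq]
    | succ k ih =>
      intro hk
      have hk' : k < i := Nat.lt_of_succ_le hk
      obtain ⟨h1, h2, h3⟩ := H k hk'
      have hstep := (step_lemma ε Δ hε0 hε hΔe k h1 h2 h3).1
      have ihk := ih (le_of_lt hk')
      calc
        Δ * Real.exp (-(2 - ε/2) * ((k+1 : ℕ):ℝ) / M)
            = (Δ * Real.exp (-(2 - ε/2) * k / M)) * Real.exp (-(2 - ε/2) / M) := by
              rw [mul_assoc, ← Real.exp_add]
              congr 1
              push_cast
              field_simp
              ring
        _ ≤ (LTseq ε Δ k).2 * Real.exp (-(2 - ε/2) / M) :=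
              mul_le_mul_of_nonneg_right ihk (Real.exp_pos _).le
        _ ≤ (LTseq ε Δ (k+1)).2 := hstep
  have hc2 : (LTseq ε Δ i).2 > Δ * Real.exp (-2 * X) := by
    have h1 := key i le_rfl
    have h2 : Real.exp (-2 * X) < Real.exp (-(2 - ε/2) * i / M) := by
      apply Real.exp_lt_exp.2
      have hiM : (i:ℝ) / M ≤ X := by rw [div_le_iff₀ hM0]; linarith
      have h6 : (2 - ε/2) * ((i:ℝ)/M) ≤ (2 - ε/2) * X :=
        mul_le_mul_of_nonneg_left hiM (by linarith)
      have hεX : 0 < ε/2 * X := by positivity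
      have heq2 : -(2 - ε/2) * (i:ℝ) / M = -((2 - ε/2) * ((i:ℝ)/M)) := by ring
      rw [heq2]
      nlinarith
    have h7 := mul_lt_mul_of_pos_left h2 hΔ0
    linarith
  obtain ⟨k, rfl⟩ : ∃ k, i = k + 1 := ⟨i - 1, (Nat.succ_pred_eq_of_pos hi1).symm⟩
  obtain ⟨h1, h2, h3⟩ := H k (Nat.lt_succ_self k)
  have hstep := (step_lemma ε Δ hε0 hε hΔe k h1 h2 h3).2
  have h730 : Δ ^ ((9:ℝ)/10) = Δ ^ ((2:ℝ)/3) * Δ ^ ((7:ℝ)/30) := by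
    rw [← Real.rpow_add hΔ0]; norm_num
  have hΔ23 : 0 < Δ ^ ((2:ℝ)/3) := Real.rpow_pos_of_pos hΔ0 _
  have hb : (4:ℝ)/ε < Δ ^ ((7:ℝ)/30) := by
    rw [Real.rpow_def_of_pos hΔ0]
    have he := Real.add_one_le_exp (M * (7/30))
    have h4 : 4/ε < M * (7/30) := by
      rw [div_lt_iff₀ hε0]
      nlinarith
    linarith
  have hTk : ε/2 * (LTseq ε Δ k).2 - 2 * Δ ^ ((2:ℝ)/3) > 0 := by
    have h5 : Δ ^ ((2:ℝ)/3) * (4/ε) < Δ ^ ((2:ℝ)/3) * Δ ^ ((7:ℝ)/30) :=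
      (mul_lt_mul_iff_right₀ hΔ23).2 hb
    have h7 : (4:ℝ)/ε * Δ ^ ((2:ℝ)/3) < (LTseq ε Δ k).2 := by
      rw [h730] at h3
      nlinarith
    have h8 : ε/2 * ((4:ℝ)/ε * Δ ^ ((2:ℝ)/3)) < ε/2 * (LTseq ε Δ k).2 :=
      (mul_lt_mul_iff_right₀ (by positivity)).2 h7
    have h9 : ε/2 * ((4:ℝ)/ε * Δ ^ ((2:ℝ)/3)) = 2 * Δ ^ ((2:ℝ)/3) := by
      field_simp; ring
    linarith
  exact ⟨by linarith, hc2, hc3⟩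
end
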